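/- arXiv:1412.1645 — 3 statements merged into one kernel-verified Lean document; each statement's English description precedes it below -/
import Mathlib

section
/- Let G be an abelian group and define A_G : G^{ℤ≥0} → G^{ℤ≥0} by A_G(g) = (g_0, g_0g_1, g_1g_2, g_2g_3, …), i.e. A_G(g)_0 = g_0 and A_G(g)_k = g_{k-1}g_k for k ≥ 1 (a group automorphism of G^{ℤ≥0}). Then for every n ∈ ℤ, every k ≥ 0 and every g ∈ G^{ℤ≥0}, the n-th iterate (including negative n) satisfies A_G^n(g)_k = ∏_{j=0}^{k} g_j^{C(n, k−j)}, where C(n,i) is the generalised binomial coefficient. -/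
/-!
Write `binomConv n g` for the right-hand side. Pascal's rule `C(n+1, i+1) = C(n, i) + C(n, i+1)`
gives `A (binomConv n g) = binomConv (n + 1) g`, and `binomConv 0 g = g`. Induction upwards from
`n = 0` gives the claim for `n ≥ 0`, and injectivity of `A` carries it down to negative `n`.
-/

open Finset

/-- Generalised binomial coefficient `C(n,k)` for integer `n`:
`n(n-1)⋯(n-k+1)/k!`, realised via `Ring.choose` on the binomial ring `ℤ`. -/
noncomputable def gchoose (n : ℤ) (k : ℕ) : ℤ := Ring.choose n k

section BinomConv

variable {G : Type*} [CommGroup G]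

noncomputable def binomConv (n : ℤ) (g : ℕ → G) (k : ℕ) : G :=
  ∏ j ∈ range (k + 1), g j ^ gchoose n (k - j)

def pascalStep (g : ℕ → G) (k : ℕ) : G :=
  if k = 0 then g 0 else g (k - 1) * g k

theorem binomConv_zero (g : ℕ → G) : binomConv 0 g = g := by
  funext k
  rw [binomConv, prod_range_succ, Nat.sub_self, gchoose, Ring.choose_zero_right, zpow_one,
    prod_eq_one, one_mul]
  intro j hj
  rw [gchoose, Ring.choose_zero_pos ℤ (by simp at hj; omega), zpow_zero]

theorem binomConv_apply_zero (n : ℤ) (g : ℕ → G) : binomConv n g 0 = g 0 := by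
  simp [binomConv, gchoose]

theorem binomConv_add_one_apply_succ (n : ℤ) (g : ℕ → G) (k : ℕ) :
    binomConv (n + 1) g (k + 1) = binomConv n g k * binomConv n g (k + 1) := by
  have pascal : ∀ j ∈ range (k + 1),
      g j ^ gchoose (n + 1) (k + 1 - j) = g j ^ gchoose n (k - j) * g j ^ gchoose n (k + 1 - j) := by
    intro j hj
    rw [show k + 1 - j = k - j + 1 by simp at hj; omega, gchoose, gchoose, gchoose,
      Ring.choose_succ_succ, zpow_add]
  rw [binomConv, binomConv, binomConv, prod_range_succ, prod_range_succ _ (k + 1),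
    prod_congr rfl pascal, prod_mul_distrib, Nat.sub_self]
  simp only [gchoose, Ring.choose_zero_right, zpow_one, mul_assoc]

theorem pascalStep_binomConv (n : ℤ) (g : ℕ → G) :
    pascalStep (binomConv n g) = binomConv (n + 1) g := by
  funext k
  cases k with
  | zero => simp [pascalStep, binomConv_apply_zero]
  | succ k => simp [pascalStep, binomConv_add_one_apply_succ]

end BinomConv

/-- For a commutative group `G` and the automorphism `A` of `G^{ℤ≥0}` given by
`A(g) = (g_0, g_0 g_1, g_1 g_2, …)`, the `n`-th iterate (for `n : ℤ`) satisfies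
`A^n(g)_k = ∏_{j=0}^k g_j ^ C(n, k-j)`. -/
theorem stmt0 {G : Type*} [CommGroup G] (A : MulAut (ℕ → G))
    (hA : ∀ (g : ℕ → G) (k : ℕ), A g k = if k = 0 then g 0 else g (k - 1) * g k)
    (n : ℤ) (k : ℕ) (g : ℕ → G) :
    (A ^ n) g k = ∏ j ∈ Finset.range (k + 1), g j ^ gchoose n (k - j) := by
  have hA_eq : ∀ g, A g = pascalStep g := fun g => funext (hA g)
  have A_binomConv : ∀ n g, A (binomConv n g) = binomConv (n + 1) g := fun n g => by
    rw [hA_eq, pascalStep_binomConv]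
  suffices h : ∀ n : ℤ, ∀ g, (A ^ n) g = binomConv n g from congrFun (h n g) k
  intro n
  induction n using Int.induction_on with
  | zero => simp [binomConv_zero]
  | succ n ih =>
    intro g
    rw [add_comm, zpow_one_add, MulAut.mul_apply, ih, A_binomConv, add_comm]
  | pred n ih =>
    intro g
    apply A.injective
    rw [← MulAut.mul_apply, ← zpow_one_add, A_binomConv]
    simpa using ih g
end

section
/- Let (X,s) and (Y,u) be dynamical systems and let π : X → Y be a homomorphism. If g ∈ G_m(X,s) for some m ≥ 0 is such that g(x) = g(x′) whenever x, x′ ∈ X satisfy π(x) = π(x′), then there exists f ∈ G_m(Y,u) with g = f ∘ π. -/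
noncomputable section

/-- The circle group 𝕋. -/
abbrev 𝕋 := Circle

/-- The groups `G_m(X,s)` of quasi-eigenfunctions of a dynamical system:
`G_0` is the set of constant 𝕋-valued (continuous) functions, and
`G_{m+1} = {g continuous : g ∘ s = f · g for some f ∈ G_m}`. -/
def Gqe {X : Type*} [TopologicalSpace X] (s : X → X) : ℕ → Set (X → 𝕋)
  | 0 => {g | Continuous g ∧ ∃ c : 𝕋, g = fun _ => c}
  | m + 1 => {g | Continuous g ∧ ∃ f ∈ Gqe s m, ∀ x, g (s x) = f x * g x}

/-!
Induction on `m`. If `g ∘ s = h · g` and `g` is constant on the fibres of `π`, then so is the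
multiplier `h = (g ∘ s) / g`, because `π` intertwines `s` and `u`; by induction `h = f' ∘ π`
with `f' ∈ G_m(Y,u)`. Since `X` is compact and `Y` Hausdorff, `π` is a quotient map, so `g`
descends to a continuous `f` with `g = f ∘ π`, and `f ∘ u = f' · f` holds on `π(X) = Y`.
-/

open Function Topology

theorem Topology.IsQuotientMap.exists_continuous_eq_comp {X Y Z : Type*} [TopologicalSpace X]
    [TopologicalSpace Y] [TopologicalSpace Z] {π : X → Y} (hπ : IsQuotientMap π) {g : X → Z}
    (hg : Continuous g) (hfib : FactorsThrough g π) :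
    ∃ f : Y → Z, Continuous f ∧ g = f ∘ π := by
  let π' : C(X, Y) := ⟨π, hπ.continuous⟩
  refine ⟨hπ.lift (f := π') ⟨g, hg⟩ hfib, ContinuousMap.continuous _, ?_⟩
  exact (congrArg DFunLike.coe (hπ.lift_comp (f := π') ⟨g, hg⟩ hfib)).symm

theorem Function.FactorsThrough.of_comp_eq_mul {X Y G : Type*} [Mul G] [IsRightCancelMul G]
    {s : X → X} {u : Y → Y} {π : X → Y} (hcomm : ∀ x, π (s x) = u (π x)) {g h : X → G}
    (hrec : ∀ x, g (s x) = h x * g x) (hfib : FactorsThrough g π) : FactorsThrough h π := by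
  intro x x' hxx'
  have hs : g (s x) = g (s x') := hfib (by rw [hcomm, hcomm, hxx'])
  rw [hrec, hrec, hfib hxx'] at hs
  exact mul_right_cancel hs

namespace Gqe

theorem exists_eq_comp_of_factorsThrough {X Y : Type*} [TopologicalSpace X] [TopologicalSpace Y]
    {s : X → X} {u : Y → Y} {π : X → Y} (hπ : IsQuotientMap π)
    (hcomm : ∀ x, π (s x) = u (π x)) (m : ℕ) {g : X → 𝕋} (hg : g ∈ Gqe s m)
    (hfib : FactorsThrough g π) : ∃ f ∈ Gqe u m, g = f ∘ π := by
  induction m generalizing g with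
  | zero =>
    obtain ⟨-, c, rfl⟩ := hg
    exact ⟨fun _ => c, ⟨continuous_const, c, rfl⟩, rfl⟩
  | succ m ih =>
    obtain ⟨hgc, h, hh, hrec⟩ := hg
    obtain ⟨f', hf', rfl⟩ := ih hh (hfib.of_comp_eq_mul hcomm hrec)
    obtain ⟨f, hfc, rfl⟩ := hπ.exists_continuous_eq_comp hgc hfib
    refine ⟨f, ⟨hfc, f', hf', ?_⟩, rfl⟩
    intro y
    obtain ⟨x, rfl⟩ := hπ.surjective y
    simpa only [comp_apply, hcomm] using hrec x

end Gqe

theorem stmt10_general {X Y : Type*} [TopologicalSpace X] [CompactSpace X]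
    [TopologicalSpace Y] [T2Space Y]
    (s : X ≃ₜ X) (u : Y ≃ₜ Y) (π : X → Y)
    (hπc : Continuous π) (hπs : Function.Surjective π)
    (hcomm : ∀ x, π (s x) = u (π x))
    (m : ℕ) (g : X → 𝕋) (hg : g ∈ Gqe ⇑s m)
    (hfib : ∀ x x', π x = π x' → g x = g x') :
    ∃ f ∈ Gqe ⇑u m, g = f ∘ π :=
  Gqe.exists_eq_comp_of_factorsThrough (hπc.isClosedMap.isQuotientMap hπc hπs) hcomm m hg
    fun _ _ => hfib _ _

/-- If `π : (X,s) → (Y,u)` is a homomorphism of dynamical systems and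
`g ∈ G_m(X,s)` is constant on the fibres of `π`, then `g = f ∘ π` for some
`f ∈ G_m(Y,u)`. -/
theorem stmt10 {X Y : Type*} [TopologicalSpace X] [CompactSpace X] [T2Space X]
    [TopologicalSpace Y] [CompactSpace Y] [T2Space Y]
    (s : X ≃ₜ X) (u : Y ≃ₜ Y) (π : X → Y)
    (hπc : Continuous π) (hπs : Function.Surjective π)
    (hcomm : ∀ x, π (s x) = u (π x))
    (m : ℕ) (g : X → 𝕋) (hg : g ∈ Gqe ⇑s m)
    (hfib : ∀ x x', π x = π x' → g x = g x') :
    ∃ f ∈ Gqe ⇑u m, g = f ∘ π :=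
  stmt10_general s u π hπc hπs hcomm m g hg hfib
end
end

section
/- Let X be a group carrying a compact Hausdorff topology (no continuity of the group operations is assumed), and let A, B ⊆ X be subgroups such that the relations R(A) = {(x,y) ∈ X×X : x⁻¹y ∈ A} and R(B) = {(x,y) ∈ X×X : x⁻¹y ∈ B} are closed in X×X. Suppose B is normal in X, so that AB is a subgroup of X. Then the relation R(AB) = {(x,y) ∈ X×X : x⁻¹y ∈ AB} is closed in X×X; equivalently, the quotient space X/(AB) is Hausdorff. -/
/-! The relation `R(S·T)` is the composite `R(S) ○ R(T)`: `x⁻¹y = st` exactly when `z = xs`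
satisfies `x⁻¹z ∈ S` and `z⁻¹y ∈ T`. A composite of closed relations through a compact space is
the projection of a closed set along a compact factor, hence closed. -/

open scoped Pointwise SetRel

theorem IsClosed.setRelComp {α β γ : Type*} [TopologicalSpace α] [TopologicalSpace β]
    [TopologicalSpace γ] [CompactSpace β] {R : SetRel α β} {S : SetRel β γ}
    (hR : IsClosed R) (hS : IsClosed S) : IsClosed (R ○ S) := by
  have hgraph : IsClosed {q : (α × γ) × β | (q.1.1, q.2) ∈ R ∧ (q.2, q.1.2) ∈ S} :=
    (hR.preimage (by fun_prop)).inter (hS.preimage (by fun_prop))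
  convert isClosedMap_fst_of_compactSpace _ hgraph using 1
  ext ⟨a, c⟩
  simp [SetRel.mem_comp]

def leftCosetRel {X : Type*} [Group X] (s : Set X) : SetRel X X := {p | p.1⁻¹ * p.2 ∈ s}

theorem leftCosetRel_mul {X : Type*} [Group X] (s t : Set X) :
    leftCosetRel (s * t) = leftCosetRel s ○ leftCosetRel t := by
  ext ⟨x, y⟩
  simp only [leftCosetRel, SetRel.mem_comp, Set.mem_ofPred_eq, Set.mem_mul]
  constructor
  · rintro ⟨a, ha, b, hb, hab⟩
    refine ⟨x * a, by simpa using ha, ?_⟩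
    rwa [mul_inv_rev, mul_assoc, ← hab, inv_mul_cancel_left]
  · rintro ⟨z, hxz, hzy⟩
    exact ⟨x⁻¹ * z, hxz, z⁻¹ * y, hzy, by group⟩

theorem stmt17_general {X : Type*} [Group X] [TopologicalSpace X] [CompactSpace X]
    (A B : Subgroup X)
    (hA : IsClosed {p : X × X | p.1⁻¹ * p.2 ∈ A})
    (hBcl : IsClosed {p : X × X | p.1⁻¹ * p.2 ∈ B}) :
    IsClosed {p : X × X | p.1⁻¹ * p.2 ∈ (A : Set X) * (B : Set X)} := by
  change IsClosed (leftCosetRel ((A : Set X) * (B : Set X)))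
  rw [leftCosetRel_mul]
  exact hA.setRelComp hBcl

/-- Let `X` be a group carrying a compact Hausdorff topology (no continuity of
the group operations assumed), and let `A, B` be subgroups whose quotient
relations `{(x,y) : x⁻¹y ∈ A}` and `{(x,y) : x⁻¹y ∈ B}` are closed. If `B` is
normal (so that `A·B` is a subgroup), then the quotient relation
`{(x,y) : x⁻¹y ∈ A·B}` is closed; equivalently, `X/(AB)` is Hausdorff. -/
theorem stmt17 {X : Type*} [Group X] [TopologicalSpace X] [CompactSpace X] [T2Space X]
    (A B : Subgroup X) (hB : B.Normal)
    (hA : IsClosed {p : X × X | p.1⁻¹ * p.2 ∈ A})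
    (hBcl : IsClosed {p : X × X | p.1⁻¹ * p.2 ∈ B}) :
    IsClosed {p : X × X | p.1⁻¹ * p.2 ∈ (A : Set X) * (B : Set X)} :=
  stmt17_general A B hA hBcl
end
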